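/- arXiv:1206.5515 — 2 statements merged into one kernel-verified Lean document; each statement's English description precedes it below -/
import Mathlib

section
/- Every stochastic process (X_t)_{t∈[0,1]} with values in ℝⁿ which is continuous in probability admits a measurable version: a process (Y_t) that is jointly measurable on Ω×[0,1] with Y_t = X_t almost surely for every t. -/
open MeasureTheory Set

noncomputable section

/-- `ℝⁿ` with the Euclidean norm. -/
abbrev En (n : ℕ) := EuclideanSpace ℝ (Fin n)

/-- `γ` is a coupling of `μ` and `ν`. -/
def IsCoupling {n : ℕ} (γ : Measure (En n × En n)) (μ ν : Measure (En n)) : Prop :=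
  γ.map Prod.fst = μ ∧ γ.map Prod.snd = ν

/-- The squared quadratic Wasserstein distance `W₂²(μ,ν)`. -/
def W2sq {n : ℕ} (μ ν : Measure (En n)) : ℝ :=
  sInf { c | ∃ γ : Measure (En n × En n), IsCoupling γ μ ν ∧ c = ∫ p, ‖p.1 - p.2‖ ^ 2 ∂γ }

/-- `μ` has finite second moment. -/
def FinSecMom {n : ℕ} (μ : Measure (En n)) : Prop := Integrable (fun x => ‖x‖ ^ 2) μ

/-- The curve `t ↦ μ t` is weakly continuous on `s`. -/
def WeakContOn {n : ℕ} (μ : ℝ → Measure (En n)) (s : Set ℝ) : Prop :=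
  ∀ f : BoundedContinuousFunction (En n) ℝ, ContinuousOn (fun t => ∫ x, f x ∂(μ t)) s

/-- `μb` is a barycenter of the curve `t ↦ μ t`, `t ∈ [0,1]`: it minimizes
`ν ↦ ∫₀¹ W₂²(μ_t, ν) dt` over probability measures with finite second moment. -/
def IsBarycenter {n : ℕ} (μ : ℝ → Measure (En n)) (μb : Measure (En n)) : Prop :=
  IsProbabilityMeasure μb ∧ FinSecMom μb ∧
    ∀ ν : Measure (En n), IsProbabilityMeasure ν → FinSecMom ν →
      ∫ t in Icc (0:ℝ) 1, W2sq (μ t) μb ≤ ∫ t in Icc (0:ℝ) 1, W2sq (μ t) ν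

/-!
Fix `k`. By continuity in probability every `u ∈ K` has a neighbourhood on which
`P {dist (X s) (X u) > 2⁻ᵏ} < 2⁻ᵏ`; by second countability countably many of them cover `K`, and
sending `t` to the centre of the first one containing it gives a measurable `φₖ` with countable
range. Then `(t, ω) ↦ X (φₖ t) ω` is jointly measurable, and by Borel–Cantelli
`X (φₖ t) → X t` almost surely for each fixed `t`, so the pointwise limit is a measurable version.
-/

open Filter Topology
open scoped ENNReal

section

variable {α Ω β : Type*} [MeasurableSpace Ω]

theorem measurable_uncurry_comp_of_countable_range [MeasurableSpace α] {ι : Type*}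
    [MeasurableSpace ι] [MeasurableSingletonClass ι] [MeasurableSpace β] {X : ι → Ω → β}
    (hX : ∀ i, Measurable (X i)) {φ : α → ι} (hφ : Measurable φ) (hφc : (range φ).Countable) :
    Measurable fun p : α × Ω => X (φ p.1) p.2 := by
  have : Countable (range φ) := hφc.to_subtype
  have hXu : Measurable fun q : Ω × range φ => X q.2 q.1 :=
    measurable_from_prod_countable_left fun i => hX i
  exact hXu.comp (measurable_snd.prodMk (hφ.rangeFactorization.comp measurable_fst))

theorem ae_tendsto_of_tsum_measure_lt_dist_ne_top [PseudoMetricSpace β] (μ : Measure Ω)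
    {f : ℕ → Ω → β} {g : Ω → β} {ε : ℕ → ℝ} (hε : Tendsto ε atTop (𝓝 0))
    (hsum : ∑' k, μ {ω | ε k < dist (g ω) (f k ω)} ≠ ∞) :
    ∀ᵐ ω ∂μ, Tendsto (fun k => f k ω) atTop (𝓝 (g ω)) := by
  filter_upwards [ae_eventually_notMem hsum] with ω hω
  rw [tendsto_iff_dist_tendsto_zero]
  refine squeeze_zero' (Eventually.of_forall fun k => dist_nonneg) ?_ hε
  filter_upwards [hω] with k hk
  rw [dist_comm]
  exact not_lt.1 hk

end

section

variable {α Ω β : Type*} [MeasurableSpace Ω] [TopologicalSpace α] [SecondCountableTopology α]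
  [MeasurableSpace α] [OpensMeasurableSpace α]

theorem exists_measurable_countable_range_forall_of_eventually
    {K : Set α} {R : α → α → Prop} (hR : ∀ u ∈ K, ∀ᶠ s in 𝓝[K] u, R s u) :
    ∃ φ : α → α, Measurable φ ∧ (range φ).Countable ∧ ∀ t ∈ K, R t (φ t) := by
  classical
  have hV : ∀ u ∈ K, ∃ V : Set α, IsOpen V ∧ u ∈ V ∧ V ∩ K ⊆ {s | R s u} :=
    fun u hu => mem_nhdsWithin.1 (hR u hu)
  choose! V hVo hmem hVR using hV
  obtain ⟨T, hTK, hTc, hKT⟩ := TopologicalSpace.countable_cover_nhdsWithin (f := V) fun u hu =>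
    mem_nhdsWithin_of_mem_nhds ((hVo u hu).mem_nhds (hmem u hu))
  rcases T.eq_empty_or_nonempty with rfl | hT
  · have hK : K = ∅ := by simpa using hKT
    rcases isEmpty_or_nonempty α with hα | ⟨⟨a⟩⟩
    · exact ⟨id, measurable_id, (range id).toFinite.countable, by simp [hK]⟩
    · exact ⟨fun _ => a, measurable_const, (countable_singleton a).mono range_const_subset,
        by simp [hK]⟩
  obtain ⟨e, rfl⟩ := hTc.exists_eq_range hT
  have he : ∀ n, e n ∈ K := fun n => hTK ⟨n, rfl⟩
  -- the second disjunct makes `Nat.find` total; points outside the cover are sent to `e 0`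
  let p : ℕ → α → Prop := fun n x => x ∈ V (e n) ∪ (⋃ m, V (e m))ᶜ
  have hp : ∀ x, ∃ n, p n x := fun x => by
    by_cases hx : x ∈ ⋃ m, V (e m)
    · obtain ⟨n, hn⟩ := mem_iUnion.1 hx
      exact ⟨n, Or.inl hn⟩
    · exact ⟨0, Or.inr hx⟩
  refine ⟨fun x => e (Nat.find (hp x)), ?_, ?_, fun t ht => ?_⟩
  · refine Measurable.find (fun _ => measurable_const) (fun n => ?_) hp
    exact (hVo _ (he n)).measurableSet.union
      (MeasurableSet.iUnion fun m => (hVo _ (he m)).measurableSet).compl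
  · exact (countable_range e).mono (range_comp_subset_range _ e)
  · have htV : t ∈ ⋃ m, V (e m) := by simpa using hKT ht
    have hfind : t ∈ V (e (Nat.find (hp t))) :=
      (Nat.find_spec (hp t)).resolve_right (not_not.2 htV)
    exact hVR _ (he _) ⟨hfind, ht⟩

theorem exists_seq_measurable_countable_range_ae_tendsto [PseudoMetricSpace β] (P : Measure Ω)
    {K : Set α} (X : α → Ω → β)
    (hcp : ∀ t ∈ K, ∀ ε : ℝ, 0 < ε →
      Tendsto (fun s => P {ω | ε < dist (X s ω) (X t ω)}) (𝓝[K] t) (𝓝 0)) :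
    ∃ φ : ℕ → α → α, (∀ k, Measurable (φ k)) ∧ (∀ k, (range (φ k)).Countable) ∧
      ∀ t ∈ K, ∀ᵐ ω ∂P, Tendsto (fun k => X (φ k t) ω) atTop (𝓝 (X t ω)) := by
  have hstep : ∀ k : ℕ, ∃ φ : α → α, Measurable φ ∧ (range φ).Countable ∧
      ∀ t ∈ K, P {ω | (2⁻¹ : ℝ) ^ k < dist (X t ω) (X (φ t) ω)} < 2⁻¹ ^ k := fun k =>
    exists_measurable_countable_range_forall_of_eventually fun u hu =>
      (hcp u hu _ (by positivity)).eventually_lt_const (ENNReal.pow_pos (by norm_num) k)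
  choose φ hφm hφc hφP using hstep
  refine ⟨φ, hφm, hφc, fun t ht => ae_tendsto_of_tsum_measure_lt_dist_ne_top P
    (tendsto_pow_atTop_nhds_zero_of_lt_one (r := (2⁻¹ : ℝ)) (by norm_num) (by norm_num)) ?_⟩
  exact ne_top_of_le_ne_top (b := ∑' k, (2⁻¹ : ℝ≥0∞) ^ k) (by simp)
    (ENNReal.tsum_le_tsum fun k => (hφP k t ht).le)

theorem exists_measurable_version [MeasurableSingletonClass α] [MetricSpace β] [CompleteSpace β]
    [SecondCountableTopology β] [MeasurableSpace β] [BorelSpace β] [Nonempty β]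
    (P : Measure Ω) {K : Set α} (X : α → Ω → β) (hX : ∀ t, Measurable (X t))
    (hcp : ∀ t ∈ K, ∀ ε : ℝ, 0 < ε →
      Tendsto (fun s => P {ω | ε < dist (X s ω) (X t ω)}) (𝓝[K] t) (𝓝 0)) :
    ∃ Y : α → Ω → β, Measurable (fun p : α × Ω => Y p.1 p.2) ∧
      ∀ t ∈ K, ∀ᵐ ω ∂P, Y t ω = X t ω := by
  obtain ⟨φ, hφm, hφc, hφX⟩ := exists_seq_measurable_countable_range_ae_tendsto P X hcp
  refine ⟨fun t ω => limUnder atTop fun k => X (φ k t) ω, ?_, fun t ht => ?_⟩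
  · exact (StronglyMeasurable.limUnder fun k =>
      (measurable_uncurry_comp_of_countable_range hX (hφm k) (hφc k)).stronglyMeasurable).measurable
  · filter_upwards [hφX t ht] with ω hω using hω.limUnder_eq

end

theorem stmt11_general {n : ℕ} {Ω : Type*} [MeasurableSpace Ω] (P : Measure Ω)
    (X : ℝ → Ω → En n) (hmeas : ∀ t, Measurable (X t))
    (hcp : ∀ t ∈ Icc (0:ℝ) 1, ∀ ε : ℝ, 0 < ε →
      Filter.Tendsto (fun s => P {ω | ε < dist (X s ω) (X t ω)})
        (nhdsWithin t (Icc (0:ℝ) 1)) (nhds 0)) :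
    ∃ Y : ℝ → Ω → En n, Measurable (fun p : ℝ × Ω => Y p.1 p.2) ∧
      ∀ t ∈ Icc (0:ℝ) 1, ∀ᵐ ω ∂P, Y t ω = X t ω :=
  exists_measurable_version P X hmeas hcp

/-- every `ℝⁿ`-valued stochastic process on `[0,1]` that is continuous in
probability admits a jointly measurable version. -/
theorem stmt11 {n : ℕ} {Ω : Type*} [MeasurableSpace Ω] (P : Measure Ω)
    [IsProbabilityMeasure P] (X : ℝ → Ω → En n) (hmeas : ∀ t, Measurable (X t))
    (hcp : ∀ t ∈ Icc (0:ℝ) 1, ∀ ε : ℝ, 0 < ε →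
      Filter.Tendsto (fun s => P {ω | ε < dist (X s ω) (X t ω)})
        (nhdsWithin t (Icc (0:ℝ) 1)) (nhds 0)) :
    ∃ Y : ℝ → Ω → En n, Measurable (fun p : ℝ × Ω => Y p.1 p.2) ∧
      ∀ t ∈ Icc (0:ℝ) 1, ∀ᵐ ω ∂P, Y t ω = X t ω :=
  stmt11_general P X hmeas hcp
end
end

section
/- Under Assumption B, if additionally μ_{t₀} is absolutely continuous with respect to Lebesgue measure for some t₀ ∈ [0,1], then the optimal process admits a Monge (deterministic) representation: X_t^{opt} = F_t(X_{t₀}^{opt}), where F_t = Du_t ∘ Du*_{t₀} pushes μ_{t₀} forward to μ_t for each t, and F_{t₀} is the identity μ_{t₀}-almost everywhere. Here u*_{t₀} is the Legendre transform of u_{t₀}, and Du_t is the Brenier map from the barycenter μ^∞ to μ_t. -/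
open MeasureTheory Set

noncomputable section

/-!
Write `z = ∇u_{t₀}(y)`. The Legendre transform of `u_{t₀}` truncated to the ball of radius `m`
is `m`-Lipschitz, so by Rademacher's theorem it is differentiable off a Lebesgue-null set, which
`μ_{t₀} = (∇u_{t₀})_# μ^∞` does not charge; wherever it is differentiable at `z` with `m ≥ |y|`,
its gradient there is `y`. Hence `∇u_{t₀}` is injective on a set of full `μ^∞`-measure, and by
Lusin–Souslin it has a measurable left inverse `S` there. Then `F_t = ∇u_t ∘ S`.
-/

open Metric Filter
open scoped RealInnerProductSpace

section ConvexAnalysis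

variable {E : Type*} [NormedAddCommGroup E] [InnerProductSpace ℝ E] {f : E → ℝ} {x y z w : E}

/-- The Legendre transform of `f` with the supremum restricted to the ball of radius `m`; unlike
the full transform it is finite and Lipschitz, hence differentiable almost everywhere. -/
def legendreTrunc (f : E → ℝ) (m : ℕ) (z : E) : ℝ :=
  sSup ((fun x => ⟪x, z⟫ - f x) '' closedBall 0 m)

section Gradient

variable [CompleteSpace E]

theorem ConvexOn.add_inner_le_of_hasGradientAt (hf : ConvexOn ℝ univ f)
    (hy : HasGradientAt f z y) (x : E) : f y + ⟪z, x - y⟫ ≤ f x := by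
  let ℓ : ℝ →ᵃ[ℝ] E := AffineMap.lineMap y x
  have hline : ConvexOn ℝ univ (f ∘ ℓ) := by simpa using hf.comp_affineMap ℓ
  have hderiv : HasDerivAt (f ∘ ℓ) ⟪z, x - y⟫ 0 := by
    have hy' : HasFDerivAt f (InnerProductSpace.toDual ℝ E z) (ℓ 0) := by
      simpa [ℓ] using hy.hasFDerivAt
    simpa using hy'.comp_hasDerivAt (0:ℝ) AffineMap.hasDerivAt_lineMap
  have := hline.le_slope_of_hasDerivAt (mem_univ 0) (mem_univ 1) zero_lt_one hderiv
  simp [slope_def_field, ℓ] at this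
  linarith

theorem eq_of_hasGradientAt_of_forall_add_inner_le {v : E → ℝ}
    (hsub : ∀ z', v z + ⟪y, z' - z⟫ ≤ v z') (hv : HasGradientAt v w z) : w = y := by
  have hmin : IsLocalMin (fun z' => v z' - ⟪y, z'⟫) z := Eventually.of_forall fun z' => by
    have := hsub z'
    rw [inner_sub_right] at this
    simp only
    linarith
  have hderiv : HasFDerivAt (fun z' => v z' - ⟪y, z'⟫)
      (InnerProductSpace.toDual ℝ E w - InnerProductSpace.toDual ℝ E y) z :=
    hv.hasFDerivAt.sub ((InnerProductSpace.toDual ℝ E y).hasFDerivAt)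
  have := hmin.hasFDerivAt_eq_zero hderiv
  rw [sub_eq_zero] at this
  exact (InnerProductSpace.toDual ℝ E).injective (by exact_mod_cast this)

theorem ConvexOn.legendreTrunc_le_of_hasGradientAt (hf : ConvexOn ℝ univ f) {m : ℕ}
    (hy : HasGradientAt f z y) : legendreTrunc f m z ≤ ⟪y, z⟫ - f y := by
  refine csSup_le ((nonempty_closedBall.2 m.cast_nonneg).image _) ?_
  rintro _ ⟨x, -, rfl⟩
  have := hf.add_inner_le_of_hasGradientAt hy x
  rw [inner_sub_right, real_inner_comm x, real_inner_comm y] at this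
  simp only
  linarith

end Gradient

section Proper

variable [ProperSpace E]

theorem bddAbove_legendreTrunc_image {m : ℕ} (hf : ContinuousOn f (closedBall 0 m)) (z : E) :
    BddAbove ((fun x => ⟪x, z⟫ - f x) '' closedBall 0 m) :=
  ((isCompact_closedBall _ _).image_of_continuousOn
    ((continuous_id.inner continuous_const).continuousOn.sub hf)).bddAbove

theorem inner_sub_le_legendreTrunc {m : ℕ} (hf : ContinuousOn f (closedBall 0 m))
    (hx : ‖x‖ ≤ m) (z : E) : ⟪x, z⟫ - f x ≤ legendreTrunc f m z :=
  le_csSup (bddAbove_legendreTrunc_image hf z) ⟨x, mem_closedBall_zero_iff.2 hx, rfl⟩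

theorem lipschitzWith_legendreTrunc {m : ℕ} (hf : ContinuousOn f (closedBall 0 m)) :
    LipschitzWith m (legendreTrunc f m) := by
  refine LipschitzWith.of_le_add_mul _ fun z₁ z₂ => ?_
  refine csSup_le ((nonempty_closedBall.2 m.cast_nonneg).image _) ?_
  rintro _ ⟨x, hx, rfl⟩
  have hx' : ‖x‖ ≤ m := mem_closedBall_zero_iff.1 hx
  calc ⟪x, z₁⟫ - f x = (⟪x, z₂⟫ - f x) + ⟪x, z₁ - z₂⟫ := by rw [inner_sub_right]; ring
    _ ≤ legendreTrunc f m z₂ + m * dist z₁ z₂ := by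
      gcongr
      · exact inner_sub_le_legendreTrunc hf hx' z₂
      · calc ⟪x, z₁ - z₂⟫ ≤ ‖x‖ * ‖z₁ - z₂‖ := real_inner_le_norm _ _
          _ ≤ m * dist z₁ z₂ := by rw [dist_eq_norm]; gcongr

/-- At `z = ∇f(y)` the supremum defining the transform is attained at `y`, so `y` is a
subgradient of the transform at `z`. -/
theorem ConvexOn.eq_of_hasGradientAt_legendreTrunc (hf : ConvexOn ℝ univ f) {m : ℕ}
    (hfc : ContinuousOn f (closedBall 0 m)) (hy : HasGradientAt f z y) (hym : ‖y‖ ≤ m)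
    (hw : HasGradientAt (legendreTrunc f m) w z) : w = y := by
  refine eq_of_hasGradientAt_of_forall_add_inner_le (fun z' => ?_) hw
  have h₁ := hf.legendreTrunc_le_of_hasGradientAt (m := m) hy
  have h₂ := inner_sub_le_legendreTrunc hfc hym z'
  rw [inner_sub_right]
  linarith

end Proper

section FiniteDimensional

variable [FiniteDimensional ℝ E]

theorem ConvexOn.injOn_of_hasGradientAt (hf : ConvexOn ℝ univ f) (T : E → E) :
    InjOn T {y | HasGradientAt f (T y) y ∧
      ∀ m : ℕ, DifferentiableAt ℝ (legendreTrunc f m) (T y)} := by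
  rintro y₁ ⟨hy₁, hd⟩ y₂ ⟨hy₂, -⟩ hT
  obtain ⟨m, hm⟩ := exists_nat_ge (max ‖y₁‖ ‖y₂‖)
  have hfc : ContinuousOn f (closedBall 0 m) := (hf.continuousOn isOpen_univ).mono (subset_univ _)
  rw [hT] at hy₁ hd
  have hw := (hd m).hasGradientAt
  exact (hf.eq_of_hasGradientAt_legendreTrunc hfc hy₁ (le_of_max_le_left hm) hw).symm.trans
    (hf.eq_of_hasGradientAt_legendreTrunc hfc hy₂ (le_of_max_le_right hm) hw)

variable [MeasurableSpace E] [BorelSpace E]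

theorem ConvexOn.ae_differentiableAt_legendreTrunc (hf : ConvexOn ℝ univ f) (μ : Measure E)
    [μ.IsAddHaarMeasure] : ∀ᵐ z ∂μ, ∀ m : ℕ, DifferentiableAt ℝ (legendreTrunc f m) z :=
  ae_all_iff.2 fun _ => (lipschitzWith_legendreTrunc
    ((hf.continuousOn isOpen_univ).mono (subset_univ _))).ae_differentiableAt

theorem ConvexOn.exists_ae_injOn_of_hasGradientAt (hf : ConvexOn ℝ univ f) {ν μ : Measure E}
    [μ.IsAddHaarMeasure] {T : E → E} (hT : AEMeasurable T ν)
    (hgrad : ∀ᵐ y ∂ν, HasGradientAt f (T y) y) (hac : ν.map T ≪ μ) :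
    ∃ A, (∀ᵐ y ∂ν, y ∈ A) ∧ InjOn T A :=
  ⟨_, hgrad.and (ae_of_ae_map hT (hac.ae_le (hf.ae_differentiableAt_legendreTrunc μ))),
    hf.injOn_of_hasGradientAt T⟩

end FiniteDimensional

end ConvexAnalysis

section AEFactorization

variable {α β γ : Type*} [MeasurableSpace α] [MeasurableSpace β] [MeasurableSpace γ]
  {μ : Measure α} {f : α → β}

theorem AEMeasurable.exists_measurable_ae_leftInverse [StandardBorelSpace α] [Nonempty α]
    [MeasurableSpace.CountablySeparated β] (hf : AEMeasurable f μ) {A : Set α}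
    (hA : ∀ᵐ x ∂μ, x ∈ A) (hinj : InjOn f A) :
    ∃ S : β → α, Measurable S ∧ ∀ᵐ x ∂μ, S (f x) = x := by
  obtain ⟨B, hBμ, hB, hBA⟩ := (hA.and hf.ae_eq_mk).exists_measurable_mem
  have := hB.standardBorel
  have hemb : MeasurableEmbedding fun b : B => hf.mk f b :=
    (hf.measurable_mk.comp measurable_subtype_coe).measurableEmbedding fun b₁ b₂ h =>
      Subtype.ext <| hinj (hBA b₁ b₁.2).1 (hBA b₂ b₂.2).1 <| by
        rwa [(hBA b₁ b₁.2).2, (hBA b₂ b₂.2).2]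
  obtain ⟨S, hS, hSf⟩ := hemb.exists_measurable_extend measurable_subtype_coe fun _ => ‹_›
  refine ⟨S, hS, Filter.mem_of_superset hBμ fun x hx => ?_⟩
  simpa [(hBA x hx).2] using congrFun hSf ⟨x, hx⟩

theorem AEMeasurable.exists_measurable_ae_factorization [StandardBorelSpace α] [Nonempty α]
    [MeasurableSpace.CountablySeparated β] (hf : AEMeasurable f μ) {A : Set α}
    (hA : ∀ᵐ x ∂μ, x ∈ A) (hinj : InjOn f A) {g : α → γ} (hg : AEMeasurable g μ) :
    ∃ F : β → γ, Measurable F ∧ ∀ᵐ x ∂μ, F (f x) = g x := by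
  obtain ⟨S, hS, hSf⟩ := hf.exists_measurable_ae_leftInverse hA hinj
  refine ⟨hg.mk g ∘ S, hg.measurable_mk.comp hS, ?_⟩
  filter_upwards [hSf, hg.ae_eq_mk] with x hx hgx
  simp [hx, hgx]

theorem MeasureTheory.Measure.map_map_of_ae_comp_eq (hf : AEMeasurable f μ) {F : β → γ}
    (hF : Measurable F) {g : α → γ} (h : ∀ᵐ x ∂μ, F (f x) = g x) : (μ.map f).map F = μ.map g := by
  rw [hF.aemeasurable.map_map_of_aemeasurable hf]
  exact Measure.map_congr h

end AEFactorization

theorem stmt17_general {n : ℕ}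
    (μ : ℝ → Measure (En n)) (hprob : ∀ t ∈ Icc (0:ℝ) 1, IsProbabilityMeasure (μ t))
    (μb : Measure (En n))
    (u : ℝ → En n → ℝ) (T : ℝ → En n → En n)
    (hconv : ∀ t ∈ Icc (0:ℝ) 1, ConvexOn ℝ univ (u t))
    (hgrad : ∀ t ∈ Icc (0:ℝ) 1, ∀ᵐ y ∂μb, HasGradientAt (u t) (T t y) y)
    (hpush : ∀ t ∈ Icc (0:ℝ) 1, μb.map (T t) = μ t)
    (t₀ : ℝ) (ht₀ : t₀ ∈ Icc (0:ℝ) 1) (hac : μ t₀ ≪ volume) :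
    ∃ F : ℝ → En n → En n,
      (∀ t ∈ Icc (0:ℝ) 1, (μ t₀).map (F t) = μ t) ∧
        (∀ᵐ z ∂(μ t₀), F t₀ z = z) ∧
          ∀ t ∈ Icc (0:ℝ) 1, ∀ᵐ y ∂μb, F t (T t₀ y) = T t y := by
  have hT : ∀ t ∈ Icc (0:ℝ) 1, AEMeasurable (T t) μb := fun t ht => by
    have := hprob t ht
    exact aemeasurable_of_map_neZero (by rw [hpush t ht]; infer_instance)
  obtain ⟨A, hA, hinj⟩ := (hconv t₀ ht₀).exists_ae_injOn_of_hasGradientAt (μ := volume)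
    (hT t₀ ht₀) (hgrad t₀ ht₀) (hpush t₀ ht₀ ▸ hac)
  have hfactor : ∀ t, ∃ F : En n → En n, t ∈ Icc (0:ℝ) 1 →
      Measurable F ∧ ∀ᵐ y ∂μb, F (T t₀ y) = T t y := fun t => by
    by_cases ht : t ∈ Icc (0:ℝ) 1
    · obtain ⟨F, hF⟩ := (hT t₀ ht₀).exists_measurable_ae_factorization hA hinj (hT t ht)
      exact ⟨F, fun _ => hF⟩
    · exact ⟨id, fun h => absurd h ht⟩
  choose F hF using hfactor
  refine ⟨F, fun t ht => ?_, ?_, fun t ht => (hF t ht).2⟩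
  · rw [← hpush t₀ ht₀, ← hpush t ht]
    exact Measure.map_map_of_ae_comp_eq (hT t₀ ht₀) (hF t ht).1 (hF t ht).2
  · rw [← hpush t₀ ht₀]
    exact (ae_map_iff (hT t₀ ht₀) (measurableSet_eq_fun (hF t₀ ht₀).1 measurable_id)).2
      (hF t₀ ht₀).2

/-- under Assumption B, if `μ_{t₀}` is absolutely continuous, the optimal
process has a Monge representation over time `t₀`: there are maps `F_t = Du_t ∘ Du*_{t₀}`
pushing `μ_{t₀}` to `μ_t`, with `F_{t₀}` the identity `μ_{t₀}`-a.e., such that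
`X_t^{opt} = F_t(X_{t₀}^{opt})`, i.e. `F_t ∘ Du_{t₀} = Du_t` holds `μ^∞`-a.e. -/
theorem stmt17 {n : ℕ} (M : Set (En n)) (hM : Bornology.IsBounded M)
    (μ : ℝ → Measure (En n)) (hprob : ∀ t ∈ Icc (0:ℝ) 1, IsProbabilityMeasure (μ t))
    (hsupp : ∀ t ∈ Icc (0:ℝ) 1, μ t Mᶜ = 0)
    (hcont : WeakContOn μ (Icc 0 1))
    (hB : 0 < volume {t | t ∈ Icc (0:ℝ) 1 ∧ ∃ g : En n → ℝ,
      μ t = volume.withDensity (fun x => ENNReal.ofReal (g x)) ∧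
        eLpNorm g ⊤ volume < ⊤})
    (μb : Measure (En n)) (hbary : IsBarycenter μ μb)
    (u : ℝ → En n → ℝ) (T : ℝ → En n → En n)
    (hconv : ∀ t ∈ Icc (0:ℝ) 1, ConvexOn ℝ univ (u t))
    (hgrad : ∀ t ∈ Icc (0:ℝ) 1, ∀ᵐ y ∂μb, HasGradientAt (u t) (T t y) y)
    (hpush : ∀ t ∈ Icc (0:ℝ) 1, μb.map (T t) = μ t)
    (hopt : ∀ t ∈ Icc (0:ℝ) 1, ∫ y, ‖y - T t y‖ ^ 2 ∂μb = W2sq μb (μ t))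
    (t₀ : ℝ) (ht₀ : t₀ ∈ Icc (0:ℝ) 1) (hac : μ t₀ ≪ volume) :
    ∃ F : ℝ → En n → En n,
      (∀ t ∈ Icc (0:ℝ) 1, (μ t₀).map (F t) = μ t) ∧
        (∀ᵐ z ∂(μ t₀), F t₀ z = z) ∧
          ∀ t ∈ Icc (0:ℝ) 1, ∀ᵐ y ∂μb, F t (T t₀ y) = T t y :=
  stmt17_general μ hprob μb u T hconv hgrad hpush t₀ ht₀ hac
end
end
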